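/- arXiv:1601.01099 — 2 statements merged into one kernel-verified Lean document; each statement's English description precedes it below -/
import Mathlib

section
/- Terminating q-Appell–Lauricella to hypergeometric transformation (Andrews): for |u| < 1 and generic parameters, the generalized q-hypergeometric series satisfies _{l+1}φ_l( a, b_1, ..., b_l ; c_1, ..., c_l ; q, u ) = ( (au;q)_∞/(u;q)_∞ ) · ∏_{k=1}^{l} ( (b_k;q)_∞/(c_k;q)_∞ ) · φ_D^{(l)}( u, c_1/b_1, ..., c_l/b_l, au ; b_1, ..., b_l ), where φ_D^{(l)}(α,β_1,...,β_l,γ;z_1,...,z_l) = ∑_{m_i≥0} ( (α;q)_{|m|} ∏(β_i;q)_{m_i} / ( (γ;q)_{|m|} ∏(q;q)_{m_i} ) ) ∏ z_i^{m_i}. -/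
/-!
Expanding each ratio
`(b_k;q)_s / (c_k;q)_s = (b_k;q)_∞ / (c_k;q)_∞ · ∑ₙ (c_k/b_k;q)_n / (q;q)_n (q^s b_k)^n`
by the q-binomial theorem turns the left side into an absolutely convergent series over
`(s, m) ∈ ℕ × ℕ^l`. Summing over `s` first instead, the inner sum is again a q-binomial series,
in `q^{|m|} u`, with value `(au;q)_∞ / (u;q)_∞ · (u;q)_{|m|} / (au;q)_{|m|}`; this is the `φ_D`
summand.

The q-binomial theorem `∑ₙ (a;q)_n / (q;q)_n z^n = (az;q)_∞ / (z;q)_∞` is proved by iterating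
Heine's functional equation `(1 - z) G(z) = (1 - a z) G(q z)` to
`(z;q)_N G(z) = (az;q)_N G(q^N z)` and letting `N → ∞`.
-/

open scoped BigOperators

/-- The infinite q-Pochhammer symbol `(z;q)_∞ = ∏_{k≥0} (1 - q^k z)`. -/
noncomputable def qPochInf (q z : ℂ) : ℂ := ∏' k : ℕ, (1 - q ^ k * z)

/-- The finite q-Pochhammer symbol `(z;q)_s = ∏_{k=0}^{s-1} (1 - q^k z)`. -/
noncomputable def qPoch (q z : ℂ) (s : ℕ) : ℂ := ∏ k ∈ Finset.range s, (1 - q ^ k * z)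

/-- The q-Appell Lauricella function `φ_D^{(l)}(α,β_1,…,β_l,γ;z_1,…,z_l)`. -/
noncomputable def qAppell (q : ℂ) (l : ℕ) (α γ : ℂ) (β z : Fin l → ℂ) : ℂ :=
  ∑' m : Fin l → ℕ,
    (qPoch q α (∑ i, m i) * ∏ i, qPoch q (β i) (m i)) /
        (qPoch q γ (∑ i, m i) * ∏ i, qPoch q q (m i)) *
      ∏ i, (z i) ^ (m i)

open Filter Topology

section QPochhammer

variable {q : ℂ}

lemma qPoch_succ (q z : ℂ) (s : ℕ) : qPoch q z (s + 1) = qPoch q z s * (1 - q ^ s * z) :=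
  Finset.prod_range_succ _ _

lemma norm_pow_mul_lt_one (hq : ‖q‖ < 1) {z : ℂ} (hz : ‖z‖ < 1) (s : ℕ) : ‖q ^ s * z‖ < 1 := by
  rw [norm_mul, norm_pow]
  exact (mul_le_of_le_one_left (norm_nonneg z) (pow_le_one₀ (norm_nonneg q) hq.le)).trans_lt hz

lemma one_sub_ne_zero_of_norm_lt_one {w : ℂ} (hw : ‖w‖ < 1) : 1 - w ≠ 0 := by
  rw [sub_ne_zero]
  rintro rfl
  simp at hw

lemma summable_pow_mul (hq : ‖q‖ < 1) (z : ℂ) : Summable fun k : ℕ => q ^ k * z :=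
  (summable_geometric_of_norm_lt_one hq).mul_right z

lemma hasProd_qPochInf (hq : ‖q‖ < 1) (z : ℂ) :
    HasProd (fun k : ℕ => 1 - q ^ k * z) (qPochInf q z) := by
  simp only [sub_eq_add_neg]
  exact (Complex.multipliable_one_add_of_summable (summable_pow_mul hq z).neg).hasProd

lemma tendsto_qPoch_qPochInf (hq : ‖q‖ < 1) (z : ℂ) :
    Tendsto (qPoch q z) atTop (𝓝 (qPochInf q z)) :=
  (hasProd_qPochInf hq z).tendsto_prod_nat

lemma qPochInf_ne_zero (hq : ‖q‖ < 1) {z : ℂ} (hz : ‖z‖ < 1) : qPochInf q z ≠ 0 := by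
  have hlog : Summable fun k : ℕ => Complex.log (1 - q ^ k * z) := by
    simpa only [sub_eq_add_neg] using
      Complex.summable_log_one_add_of_summable (summable_pow_mul hq z).neg
  rw [qPochInf, ← Complex.cexp_tsum_eq_tprod
    (fun k => one_sub_ne_zero_of_norm_lt_one (norm_pow_mul_lt_one hq hz k)) hlog]
  exact Complex.exp_ne_zero _

lemma qPochInf_eq_qPoch_mul (hq : ‖q‖ < 1) (z : ℂ) (s : ℕ) :
    qPochInf q z = qPoch q z s * qPochInf q (q ^ s * z) := by
  have htail : HasProd (fun k => 1 - q ^ (k + s) * z) (qPochInf q (q ^ s * z)) := by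
    simpa only [pow_add, mul_assoc] using hasProd_qPochInf hq (q ^ s * z)
  exact (htail.prod_range_mul (f := fun k => 1 - q ^ k * z)).tprod_eq

lemma qPoch_ne_zero_of_qPochInf_ne_zero (hq : ‖q‖ < 1) {z : ℂ} (hz : qPochInf q z ≠ 0) (s : ℕ) :
    qPoch q z s ≠ 0 :=
  left_ne_zero_of_mul (qPochInf_eq_qPoch_mul hq z s ▸ hz)

lemma qPoch_ne_zero (hq : ‖q‖ < 1) {z : ℂ} (hz : ‖z‖ < 1) (s : ℕ) : qPoch q z s ≠ 0 :=
  qPoch_ne_zero_of_qPochInf_ne_zero hq (qPochInf_ne_zero hq hz) s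

end QPochhammer

section QBinomial

variable {q : ℂ}

noncomputable def qBinomCoeff (q a : ℂ) (n : ℕ) : ℂ := qPoch q a n / qPoch q q n

lemma qBinomCoeff_zero (q a : ℂ) : qBinomCoeff q a 0 = 1 := by
  simp [qBinomCoeff, qPoch]

lemma qBinomCoeff_succ (q a : ℂ) (n : ℕ) :
    qBinomCoeff q a (n + 1) = qBinomCoeff q a n * ((1 - q ^ n * a) / (1 - q ^ n * q)) := by
  rw [qBinomCoeff, qBinomCoeff, qPoch_succ, qPoch_succ, mul_div_mul_comm]

lemma qBinomCoeff_succ_mul (hq : ‖q‖ < 1) (a : ℂ) (n : ℕ) :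
    qBinomCoeff q a (n + 1) * (1 - q ^ (n + 1)) = qBinomCoeff q a n * (1 - q ^ n * a) := by
  have hq' : 1 - q ^ n * q ≠ 0 := one_sub_ne_zero_of_norm_lt_one (norm_pow_mul_lt_one hq hq n)
  rw [qBinomCoeff_succ, pow_succ, mul_assoc, div_mul_cancel₀ _ hq']

/-- Ratio test: consecutive terms have ratio `z (1 - q^n a) / (1 - q^{n+1}) → z`. -/
lemma summable_norm_qBinomCoeff_mul_pow (hq : ‖q‖ < 1) (a : ℂ) {z : ℂ} (hz : ‖z‖ < 1) :
    Summable fun n => ‖qBinomCoeff q a n * z ^ n‖ := by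
  have hratio : Tendsto (fun n : ℕ => ‖z‖ * ‖(1 - q ^ n * a) / (1 - q ^ n * q)‖) atTop
      (𝓝 ‖z‖) := by
    have hqn := tendsto_pow_atTop_nhds_zero_of_norm_lt_one hq
    have hnum : Tendsto (fun n : ℕ => 1 - q ^ n * a) atTop (𝓝 1) := by
      simpa using tendsto_const_nhds.sub (hqn.mul_const a)
    have hden : Tendsto (fun n : ℕ => 1 - q ^ n * q) atTop (𝓝 1) := by
      simpa using tendsto_const_nhds.sub (hqn.mul_const q)
    simpa using ((hnum.div hden one_ne_zero).norm.const_mul ‖z‖)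
  refine summable_of_ratio_norm_eventually_le (r := (1 + ‖z‖) / 2) (by linarith) ?_
  filter_upwards [hratio.eventually_le_const (by linarith : ‖z‖ < (1 + ‖z‖) / 2)] with n hn
  rw [norm_norm, norm_norm, qBinomCoeff_succ, pow_succ, norm_mul, norm_mul, norm_mul, norm_mul]
  calc _ = ‖z‖ * ‖(1 - q ^ n * a) / (1 - q ^ n * q)‖ * (‖qBinomCoeff q a n‖ * ‖z ^ n‖) := by ring
    _ ≤ _ := by gcongr

lemma summable_qBinomCoeff_mul_pow (hq : ‖q‖ < 1) (a : ℂ) {z : ℂ} (hz : ‖z‖ < 1) :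
    Summable fun n => qBinomCoeff q a n * z ^ n :=
  (summable_norm_qBinomCoeff_mul_pow hq a hz).of_norm

/-- Heine's functional equation: the coefficients of `z^(n+1)` agree by `qBinomCoeff_succ_mul`. -/
lemma one_sub_mul_tsum_qBinomCoeff (hq : ‖q‖ < 1) (a : ℂ) {z : ℂ} (hz : ‖z‖ < 1) :
    (1 - z) * ∑' n, qBinomCoeff q a n * z ^ n =
      (1 - a * z) * ∑' n, qBinomCoeff q a n * (q * z) ^ n := by
  have hqz : ‖q * z‖ < 1 := by simpa using norm_pow_mul_lt_one hq hz 1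
  have S1 := (summable_qBinomCoeff_mul_pow hq a hz).hasSum
  have S2 := (summable_qBinomCoeff_mul_pow hq a hqz).hasSum
  set G1 := ∑' n, qBinomCoeff q a n * z ^ n
  set G2 := ∑' n, qBinomCoeff q a n * (q * z) ^ n
  have hdiff : HasSum (fun n => qBinomCoeff q a n * (1 - q ^ n) * z ^ n) (G1 - G2) := by
    refine (S1.sub S2).congr_fun fun n => ?_
    rw [mul_pow]; ring
  have hshift : HasSum (fun n => qBinomCoeff q a n * (1 - q ^ n * a) * z ^ (n + 1))
      (z * G1 - a * z * G2) := by
    refine ((S1.mul_left z).sub (S2.mul_left (a * z))).congr_fun fun n => ?_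
    rw [mul_pow, pow_succ]; ring
  have hdiff' := (hasSum_nat_add_iff' 1).2 hdiff
  simp only [Finset.sum_range_one, pow_zero, sub_self, mul_zero, zero_mul, sub_zero,
    qBinomCoeff_succ_mul hq] at hdiff'
  linear_combination hdiff'.unique hshift

lemma qPoch_mul_tsum_qBinomCoeff (hq : ‖q‖ < 1) (a : ℂ) {z : ℂ} (hz : ‖z‖ < 1) (N : ℕ) :
    qPoch q z N * ∑' n, qBinomCoeff q a n * z ^ n =
      qPoch q (a * z) N * ∑' n, qBinomCoeff q a n * (q ^ N * z) ^ n := by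
  induction N with
  | zero => simp [qPoch]
  | succ N ih =>
    have h := one_sub_mul_tsum_qBinomCoeff hq a (norm_pow_mul_lt_one hq hz N)
    simp only [← mul_assoc, ← pow_succ'] at h
    rw [qPoch_succ, qPoch_succ]
    linear_combination (1 - q ^ N * z) * ih + qPoch q (a * z) N * h

lemma tendsto_tsum_qBinomCoeff_mul_pow_mul (hq : ‖q‖ < 1) (a : ℂ) {z : ℂ} (hz : ‖z‖ < 1) :
    Tendsto (fun N : ℕ => ∑' n, qBinomCoeff q a n * (q ^ N * z) ^ n) atTop (𝓝 1) := by
  have hlim : ∑' n, qBinomCoeff q a n * (0 : ℂ) ^ n = 1 := by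
    rw [tsum_eq_single 0 (fun n hn => by simp [hn])]
    simp [qBinomCoeff_zero]
  rw [← hlim]
  refine tendsto_tsum_of_dominated_convergence (summable_norm_qBinomCoeff_mul_pow hq a hz)
    (fun n => ?_) (Eventually.of_forall fun N n => ?_)
  · have h0 : Tendsto (fun N : ℕ => q ^ N * z) atTop (𝓝 0) := by
      simpa using (tendsto_pow_atTop_nhds_zero_of_norm_lt_one hq).mul_const z
    exact (h0.pow n).const_mul _
  · rw [norm_mul, norm_mul, norm_pow, norm_pow, norm_mul, norm_pow]
    gcongr
    exact mul_le_of_le_one_left (norm_nonneg z) (pow_le_one₀ (norm_nonneg q) hq.le)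

theorem tsum_qBinomCoeff_mul_pow (hq : ‖q‖ < 1) (a : ℂ) {z : ℂ} (hz : ‖z‖ < 1) :
    ∑' n, qBinomCoeff q a n * z ^ n = qPochInf q (a * z) / qPochInf q z := by
  have hlhs := (tendsto_qPoch_qPochInf hq z).mul_const (∑' n, qBinomCoeff q a n * z ^ n)
  have hrhs := (tendsto_qPoch_qPochInf hq (a * z)).mul
    (tendsto_tsum_qBinomCoeff_mul_pow_mul hq a hz)
  rw [mul_one, ← funext (qPoch_mul_tsum_qBinomCoeff hq a hz)] at hrhs
  rw [eq_div_iff (qPochInf_ne_zero hq hz), mul_comm]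
  exact tendsto_nhds_unique hlhs hrhs

lemma tsum_qBinomCoeff_mul_pow_mul_pow (hq : ‖q‖ < 1) (a : ℂ) {z : ℂ} (hz : ‖z‖ < 1) (s : ℕ)
    (haz : qPoch q (a * z) s ≠ 0) :
    ∑' n, qBinomCoeff q a n * (q ^ s * z) ^ n =
      qPochInf q (a * z) / qPochInf q z * (qPoch q z s / qPoch q (a * z) s) := by
  rw [tsum_qBinomCoeff_mul_pow hq a (norm_pow_mul_lt_one hq hz s), mul_left_comm,
    qPochInf_eq_qPoch_mul hq (a * z) s, qPochInf_eq_qPoch_mul hq z s]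
  have hzs := qPoch_ne_zero hq hz s
  have htail := qPochInf_ne_zero hq (norm_pow_mul_lt_one hq hz s)
  field_simp

lemma qPochInf_div_mul_tsum_qBinomCoeff {z w : ℂ} (hq : ‖q‖ < 1) (hz : ‖z‖ < 1) (hz0 : z ≠ 0)
    (hw : qPochInf q w ≠ 0) (s : ℕ) :
    qPochInf q z / qPochInf q w * ∑' n, qBinomCoeff q (w / z) n * (q ^ s * z) ^ n =
      qPoch q z s / qPoch q w s := by
  have hws := qPoch_ne_zero_of_qPochInf_ne_zero hq hw s
  have hzinf := qPochInf_ne_zero hq hz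
  rw [tsum_qBinomCoeff_mul_pow_mul_pow hq _ hz s (by rwa [div_mul_cancel₀ _ hz0]),
    div_mul_cancel₀ _ hz0]
  field_simp

end QBinomial

section FinPiProd

variable {ι : Type*}

lemma prod_consEquiv {M : Type*} [CommMonoid M] {n : ℕ} (f : Fin (n + 1) → ι → M)
    (p : ι × (Fin n → ι)) :
    ∏ i, f i (Fin.consEquiv (fun _ => ι) p i) = f 0 p.1 * ∏ i : Fin n, f i.succ (p.2 i) := by
  simp [Fin.consEquiv, Fin.prod_univ_succ]

lemma summable_fin_pi_prod_of_nonneg {n : ℕ} (f : Fin n → ι → ℝ) (hf : ∀ i, Summable (f i))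
    (hf0 : ∀ i k, 0 ≤ f i k) : Summable fun m : Fin n → ι => ∏ i, f i (m i) := by
  induction n with
  | zero => exact (hasSum_unique _).summable
  | succ n ih =>
    rw [← (Fin.consEquiv fun _ => ι).summable_iff]
    have htail := ih (fun i => f i.succ) (fun i => hf i.succ) fun i => hf0 i.succ
    have htail0 : 0 ≤ fun m : Fin n → ι => ∏ i, f i.succ (m i) :=
      fun m => Finset.prod_nonneg fun i _ => hf0 i.succ (m i)
    have hhead0 : 0 ≤ f 0 := hf0 0
    exact ((hf 0).mul_of_nonneg htail hhead0 htail0).congr fun p => (prod_consEquiv f p).symm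

variable {R : Type*} [NormedCommRing R] [NormOneClass R]

lemma summable_norm_fin_pi_prod {n : ℕ} (f : Fin n → ι → R)
    (hf : ∀ i, Summable fun k => ‖f i k‖) :
    Summable fun m : Fin n → ι => ‖∏ i, f i (m i)‖ :=
  (summable_fin_pi_prod_of_nonneg _ hf fun _ _ => norm_nonneg _).of_nonneg_of_le
    (fun _ => norm_nonneg _) fun _ => Finset.norm_prod_le _ _

lemma tsum_fin_pi_prod [CompleteSpace R] {n : ℕ} (f : Fin n → ι → R)
    (hf : ∀ i, Summable fun k => ‖f i k‖) :
    ∑' m : Fin n → ι, ∏ i, f i (m i) = ∏ i, ∑' k, f i k := by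
  induction n with
  | zero => simp
  | succ n ih =>
    rw [← (Fin.consEquiv fun _ => ι).tsum_eq, tsum_congr (prod_consEquiv f), Fin.prod_univ_succ,
      ← ih (fun i => f i.succ) fun i => hf i.succ]
    exact (tsum_mul_tsum_of_summable_norm (hf 0)
      (summable_norm_fin_pi_prod _ fun i => hf i.succ)).symm

end FinPiProd

section Andrews

variable {l : ℕ} {q a u : ℂ} {b c : Fin l → ℂ}

noncomputable def andrewsSummand (q a u : ℂ) (b c : Fin l → ℂ) (s : ℕ) (m : Fin l → ℕ) : ℂ :=
  qBinomCoeff q a s * u ^ s * ∏ k, qBinomCoeff q (c k / b k) (m k) * (q ^ s * b k) ^ m k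

lemma summable_andrewsSummand (hq : ‖q‖ < 1) (hu : ‖u‖ < 1) (hb : ∀ k, ‖b k‖ < 1) :
    Summable (Function.uncurry (andrewsSummand q a u b c)) := by
  have hrow0 : 0 ≤ fun s : ℕ => ‖qBinomCoeff q a s * u ^ s‖ := fun _ => norm_nonneg _
  have hcol0 : 0 ≤ fun m : Fin l → ℕ => ∏ k, ‖qBinomCoeff q (c k / b k) (m k) * b k ^ m k‖ :=
    fun _ => Finset.prod_nonneg fun _ _ => norm_nonneg _
  have hdom := (summable_norm_qBinomCoeff_mul_pow hq a hu).mul_of_nonneg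
    (summable_fin_pi_prod_of_nonneg _
      (fun k => summable_norm_qBinomCoeff_mul_pow hq _ (hb k)) fun _ _ => norm_nonneg _)
    hrow0 hcol0
  refine hdom.of_norm_bounded fun p => ?_
  rw [Function.uncurry_apply_pair, andrewsSummand, norm_mul, norm_prod]
  gcongr with k
  rw [norm_mul, norm_mul, norm_pow, norm_pow, norm_mul, norm_pow]
  gcongr
  exact mul_le_of_le_one_left (norm_nonneg _) (pow_le_one₀ (norm_nonneg q) hq.le)

lemma prod_div_mul_tsum_andrewsSummand (hq : ‖q‖ < 1) (hb : ∀ k, ‖b k‖ < 1)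
    (hb0 : ∀ k, b k ≠ 0) (hc : ∀ k, qPochInf q (c k) ≠ 0) (s : ℕ) :
    (∏ k, qPochInf q (b k) / qPochInf q (c k)) * ∑' m, andrewsSummand q a u b c s m =
      (qPoch q a s * ∏ k, qPoch q (b k) s) / (qPoch q q s * ∏ k, qPoch q (c k) s) * u ^ s := by
  simp only [andrewsSummand]
  rw [tsum_mul_left, tsum_fin_pi_prod _
    fun k => summable_norm_qBinomCoeff_mul_pow hq _ (norm_pow_mul_lt_one hq (hb k) s),
    mul_left_comm (∏ k, qPochInf q (b k) / qPochInf q (c k)), ← Finset.prod_mul_distrib,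
    Finset.prod_congr rfl fun k _ => qPochInf_div_mul_tsum_qBinomCoeff hq (hb k) (hb0 k) (hc k) s]
  simp only [qBinomCoeff, div_eq_mul_inv, mul_inv, Finset.prod_mul_distrib,
    Finset.prod_inv_distrib]
  ring

lemma tsum_andrewsSummand (hq : ‖q‖ < 1) (hu : ‖u‖ < 1) (hau : ∀ M, qPoch q (a * u) M ≠ 0)
    (m : Fin l → ℕ) :
    ∑' s, andrewsSummand q a u b c s m =
      qPochInf q (a * u) / qPochInf q u *
        ((qPoch q u (∑ i, m i) * ∏ i, qPoch q (c i / b i) (m i)) /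
            (qPoch q (a * u) (∑ i, m i) * ∏ i, qPoch q q (m i)) *
          ∏ i, b i ^ m i) := by
  have hterm : ∀ s, andrewsSummand q a u b c s m =
      (∏ k, qBinomCoeff q (c k / b k) (m k) * b k ^ m k) *
        (qBinomCoeff q a s * (q ^ (∑ i, m i) * u) ^ s) := by
    intro s
    simp only [andrewsSummand, mul_pow, ← pow_mul, Finset.prod_mul_distrib,
      Finset.prod_pow_eq_pow_sum, ← Finset.mul_sum]
    ring
  rw [tsum_congr hterm, tsum_mul_left, tsum_qBinomCoeff_mul_pow_mul_pow hq a hu _ (hau _)]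
  simp only [qBinomCoeff, div_eq_mul_inv, mul_inv, Finset.prod_mul_distrib,
    Finset.prod_inv_distrib]
  ring

end Andrews

theorem stmt16_general (l : ℕ) (q u a : ℂ) (b c : Fin l → ℂ)
    (hq1 : ‖q‖ < 1) (hu : ‖u‖ < 1)
    (hb : ∀ k, ‖b k‖ < 1) (hbne : ∀ k, b k ≠ 0)
    (hden2 : ∀ k, qPochInf q (c k) ≠ 0)
    (hden4 : ∀ M : ℕ, qPoch q (a * u) M ≠ 0) :
    (∑' s : ℕ,
        (qPoch q a s * ∏ k, qPoch q (b k) s) /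
            (qPoch q q s * ∏ k, qPoch q (c k) s) * u ^ s) =
      qPochInf q (a * u) / qPochInf q u *
        (∏ k, qPochInf q (b k) / qPochInf q (c k)) *
        qAppell q l u (a * u) (fun k => c k / b k) b := by
  calc _ = ∑' s, (∏ k, qPochInf q (b k) / qPochInf q (c k)) *
        ∑' m, andrewsSummand q a u b c s m :=
      (tsum_congr (prod_div_mul_tsum_andrewsSummand hq1 hb hbne hden2)).symm
    _ = (∏ k, qPochInf q (b k) / qPochInf q (c k)) *
        ∑' m, ∑' s, andrewsSummand q a u b c s m := by
      rw [tsum_mul_left, (summable_andrewsSummand hq1 hu hb).tsum_comm]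
    _ = _ := by
      rw [tsum_congr (tsum_andrewsSummand hq1 hu hden4), tsum_mul_left, qAppell]
      ring

/-- Andrews' transformation:
`_{l+1}φ_l(a, b_1,…,b_l; c_1,…,c_l; q, u) = ((au;q)_∞/(u;q)_∞) ∏_k ((b_k;q)_∞/(c_k;q)_∞)
· φ_D^{(l)}(u, c_1/b_1, …, c_l/b_l, au; b_1, …, b_l)`. -/
theorem stmt16 (l : ℕ) (q u a : ℂ) (b c : Fin l → ℂ)
    (hq0 : 0 < ‖q‖) (hq1 : ‖q‖ < 1) (hu : ‖u‖ < 1)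
    (hb : ∀ k, ‖b k‖ < 1) (hbne : ∀ k, b k ≠ 0)
    (hden1 : qPochInf q u ≠ 0) (hden2 : ∀ k, qPochInf q (c k) ≠ 0)
    (hden3 : ∀ k, ∀ s : ℕ, qPoch q (c k) s ≠ 0)
    (hden4 : ∀ M : ℕ, qPoch q (a * u) M ≠ 0) :
    (∑' s : ℕ,
        (qPoch q a s * ∏ k, qPoch q (b k) s) /
            (qPoch q q s * ∏ k, qPoch q (c k) s) * u ^ s) =
      qPochInf q (a * u) / qPochInf q u *
        (∏ k, qPochInf q (b k) / qPochInf q (c k)) *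
        qAppell q l u (a * u) (fun k => c k / b k) b :=
  stmt16_general l q u a b c hq1 hu hb hbne hden2 hden4
end

section
/- Let x_s = q^s for s = 0,...,m+n and let ψ_s be given values. Then the Jacobi interpolation determinant formulas specialize to: P(x) = F(x)/(q;q)_{m+n}^{n+1} · det[ ∑_{s=0}^{m+n} ψ_s ( (q^{-(m+n)};q)_s/(q;q)_s ) q^{s(i+j+1)}/(x − q^s) ]_{i,j=0}^{n} and Q(x) = 1/(q;q)_{m+n}^{n} · det[ ∑_{s=0}^{m+n} ψ_s ( (q^{-(m+n)};q)_s/(q;q)_s ) q^{s(i+j+1)} (x − q^s) ]_{i,j=0}^{n-1}, where F(x) = ∏_{i=0}^{m+n}(x − q^i). These satisfy P(q^s)/Q(q^s) = ψ_s whenever Q(q^s) ≠ 0. -/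
/-!
Jacobi's numerator `P` is `(-1)^n` times the bordered Hankel determinant whose first column
holds the polynomials `F(X) ∑ₛ uₛ xₛᵏ / (X - xₛ)` and whose other columns hold the moments
`μₖ = ∑ₛ uₛ xₛᵏ`. The determinant is linear in the first column, so evaluations and coefficient
extractions pass inside it. For `b > m` the coefficient of `X^b` in that column is a combination
of moment columns, whence `deg P ≤ m`. Off the nodes, column operations `Cⱼ₊₁ ↦ z Cⱼ - Cⱼ₊₁`
turn the bordered matrix into `F(z)` times the Hankel matrix `[∑ₛ uₛ xₛ^(i+j) / (z - xₛ)]`;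
at a node `xₜ` the same operations on rows leave `uₜ F'(xₜ)` times the determinant defining
`Q(xₜ)`. On the grid `xₛ = qˢ` one has `F'(qᵗ) = (q;q)ₜ (q;q)_N / (qᵗ (q^(-N);q)ₜ)`, so
`uₜ F'(qᵗ) = ψₜ`, and the explicit `q`-formulas differ from Jacobi's by the scalar `(q;q)_N`
in every row.
-/

open scoped BigOperators

namespace Jacobi

open Finset Matrix Polynomial

section Hankel

variable {R : Type*} [CommRing R]

lemma det_of_mul_left {n : ℕ} (c : R) (A : Fin n → Fin n → R) :
    (of fun i j => c * A i j).det = c ^ n * (of A).det := by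
  have h := det_smul (of A) c
  rw [Fintype.card_fin] at h
  exact h

noncomputable def hankelReduction (n : ℕ) (z : R) : Matrix (Fin (n + 1)) (Fin (n + 1)) R :=
  of fun k j => Fin.cases (if k = 0 then 1 else 0)
    (fun j' => z * (if k = j'.castSucc then 1 else 0) - if k = j'.succ then 1 else 0) j

lemma det_hankelReduction (n : ℕ) (z : R) : (hankelReduction n z).det = (-1) ^ n := by
  have hupper : (hankelReduction n z).IsUpperTriangular := by
    intro k j hjk
    induction j using Fin.cases with
    | zero => simp [hankelReduction, (Fin.pos_iff_ne_zero.mp hjk : k ≠ 0)]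
    | succ j' =>
      have h1 : k ≠ j'.castSucc := by rintro rfl; exact absurd hjk (Fin.castSucc_lt_succ).asymm
      have h2 : k ≠ j'.succ := by rintro rfl; exact lt_irrefl _ hjk
      simp [hankelReduction, h1, h2]
  rw [det_of_isUpperTriangular hupper, Fin.prod_univ_succ]
  simp [hankelReduction, Fin.succ_ne_zero, Fin.castSucc_lt_succ.ne']

lemma mul_hankelReduction {n : ℕ} (A : Matrix (Fin (n + 1)) (Fin (n + 1)) R) (z : R) :
    A * hankelReduction n z =
      of fun i j => Fin.cases (A i 0) (fun j' => z * A i j'.castSucc - A i j'.succ) j := by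
  ext i j
  induction j using Fin.cases with
  | zero => simp [hankelReduction, mul_apply]
  | succ j' => simp [hankelReduction, mul_apply, mul_sub, Finset.sum_sub_distrib, mul_comm _ z]

lemma hankelReduction_transpose_mul {n : ℕ} (A : Matrix (Fin (n + 1)) (Fin (n + 1)) R) (z : R) :
    (hankelReduction n z)ᵀ * A =
      of fun i j => Fin.cases (A 0 j) (fun i' => z * A i'.castSucc j - A i'.succ j) i := by
  rw [← transpose_transpose ((hankelReduction n z)ᵀ * A), transpose_mul, transpose_transpose,
    mul_hankelReduction]
  ext i j
  induction i using Fin.cases <;> rfl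

variable {ι : Type*} [Fintype ι] (x u : ι → R)

noncomputable def moment (k : ℕ) : R := ∑ s, u s * x s ^ k

noncomputable def borderedHankel (n : ℕ) (v : Fin (n + 1) → R) :
    Matrix (Fin (n + 1)) (Fin (n + 1)) R :=
  of fun i j => Fin.cases (v i) (fun j' : Fin n => moment x u (i + j')) j

noncomputable def hankelCofactor (n : ℕ) (i : Fin (n + 1)) : R :=
  (-1) ^ (i : ℕ) * (of fun a b : Fin n => moment x u (i.succAbove a + b)).det

lemma det_borderedHankel (n : ℕ) (v : Fin (n + 1) → R) :
    (borderedHankel x u n v).det = ∑ i, hankelCofactor x u n i * v i := by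
  rw [det_succ_column_zero]
  refine sum_congr rfl fun i _ => ?_
  rw [mul_right_comm]
  rfl

lemma det_borderedHankel_mul (n : ℕ) (c : R) (v : Fin (n + 1) → R) :
    (borderedHankel x u n fun i => c * v i).det = c * (borderedHankel x u n v).det := by
  simp only [det_borderedHankel, mul_sum]
  exact sum_congr rfl fun i _ => by ring

lemma det_borderedHankel_sum {α : Type*} (S : Finset α) (n : ℕ) (v : α → Fin (n + 1) → R) :
    (borderedHankel x u n fun i => ∑ a ∈ S, v a i).det =
      ∑ a ∈ S, (borderedHankel x u n (v a)).det := by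
  simp only [det_borderedHankel, mul_sum]
  exact sum_comm

lemma det_borderedHankel_moment_add {n e : ℕ} (he : e < n) :
    (borderedHankel x u n fun i => moment x u (i + e)).det = 0 :=
  det_zero_of_column_eq (i := 0) (j := (⟨e, he⟩ : Fin n).succ) (Fin.succ_ne_zero _).symm
    fun _ => rfl

lemma neg_one_pow_mul_det_borderedHankel_pow (n : ℕ) (c : R) :
    (-1) ^ n * (borderedHankel x u n fun i => c ^ (i : ℕ)).det =
      (of fun i j : Fin n => ∑ s, u s * x s ^ (i + j : ℕ) * (c - x s)).det := by
  -- the row operations `Rᵢ₊₁ ↦ c Rᵢ - Rᵢ₊₁` clear the first column below its entry `c ^ 0 = 1`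
  rw [← det_hankelReduction n c, ← det_transpose, ← det_mul, hankelReduction_transpose_mul,
    det_succ_column_zero, Fin.sum_univ_succ]
  simp [borderedHankel, pow_succ, mul_comm c]
  congr 1
  ext i j
  simp only [submatrix_apply, of_apply, Fin.cases_succ, moment, sum_mul, ← sum_sub_distrib]
  exact sum_congr rfl fun s _ => by ring

variable [DecidableEq ι]

/-- The polynomial `F(X) ∑ₛ uₛ xₛᵏ / (X - xₛ)`, where `F = Lagrange.nodal univ x`. -/
noncomputable def momentNodal (k : ℕ) : R[X] :=
  ∑ s, C (u s * x s ^ k) * Lagrange.nodal (univ.erase s) x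

/-- Jacobi's numerator `(-1)^n det (borderedHankel x u n (momentNodal x u ·))`, written as a
cofactor expansion along the first column so that it is a polynomial. -/
noncomputable def jacobiNumerator (n : ℕ) : R[X] :=
  (-1 : R) ^ n • ∑ i, hankelCofactor x u n i • momentNodal x u i

lemma map_jacobiNumerator (n : ℕ) (L : R[X] →ₗ[R] R) :
    L (jacobiNumerator x u n) =
      (-1) ^ n * (borderedHankel x u n fun i => L (momentNodal x u i)).det := by
  simp [jacobiNumerator, det_borderedHankel]

lemma coeff_momentNodal (k b : ℕ) :
    (momentNodal x u k).coeff b = ∑ a ∈ Icc (b + 1) (Lagrange.nodal univ x).natDegree,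
      (Lagrange.nodal univ x).coeff a * moment x u (k + (a - (b + 1))) := by
  have hdiv (s : ι) :
      Lagrange.nodal (univ.erase s) x = Lagrange.nodal univ x /ₘ (X - C (x s)) := by
    rw [Lagrange.nodal_eq_mul_nodal_erase (mem_univ s),
      mul_divByMonic_cancel_left _ (monic_X_sub_C _)]
  simp only [momentNodal, finsetSum_coeff, coeff_C_mul, hdiv, coeff_divByMonic_X_sub_C, mul_sum,
    moment]
  rw [sum_comm]
  exact sum_congr rfl fun a _ => sum_congr rfl fun s _ => by ring

lemma degree_jacobiNumerator_le {m n : ℕ} (hcard : Fintype.card ι = m + n + 1) :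
    (jacobiNumerator x u n).degree ≤ m := by
  nontriviality R
  refine degree_le_iff_coeff_zero _ _ |>.mpr fun b hb => ?_
  have hb : m < b := by exact_mod_cast hb
  rw [← lcoeff_apply, map_jacobiNumerator]
  simp only [lcoeff_apply, coeff_momentNodal, Lagrange.natDegree_nodal, card_univ, hcard]
  rw [det_borderedHankel_sum, sum_eq_zero, mul_zero]
  intro a ha
  rw [det_borderedHankel_mul, det_borderedHankel_moment_add, mul_zero]
  have := mem_Icc.mp ha
  omega

lemma eval_momentNodal_node (k : ℕ) (t : ι) :
    (momentNodal x u k).eval (x t) = u t * (∏ s ∈ univ.erase t, (x t - x s)) * x t ^ k := by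
  rw [momentNodal, eval_finsetSum, sum_eq_single t]
  · rw [eval_mul, eval_C, Lagrange.eval_nodal]
    ring
  · intro s _ hst
    rw [eval_mul, Lagrange.eval_nodal_at_node (mem_erase.mpr ⟨Ne.symm hst, mem_univ t⟩),
      mul_zero]
  · exact fun h => absurd (mem_univ t) h

lemma eval_jacobiNumerator_node (n : ℕ) (t : ι) :
    (jacobiNumerator x u n).eval (x t) = u t * (∏ s ∈ univ.erase t, (x t - x s)) *
      (of fun i j : Fin n => ∑ s, u s * x s ^ (i + j : ℕ) * (x t - x s)).det := by
  rw [← leval_apply, map_jacobiNumerator]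
  simp only [leval_apply, eval_momentNodal_node, det_borderedHankel_mul]
  rw [← neg_one_pow_mul_det_borderedHankel_pow]
  ring

end Hankel

section Field

variable {K : Type*} [Field K] {ι : Type*} [Fintype ι] (x u : ι → K)

lemma neg_one_pow_mul_det_borderedHankel_stieltjes {z : K} (hz : ∀ s, z ≠ x s) (n : ℕ) :
    (-1) ^ n * (borderedHankel x u n fun i => ∑ s, u s * x s ^ (i : ℕ) / (z - x s)).det =
      (of fun i j : Fin (n + 1) => ∑ s, u s * x s ^ (i + j : ℕ) / (z - x s)).det := by
  have hcolumns : borderedHankel x u n (fun i => ∑ s, u s * x s ^ (i : ℕ) / (z - x s)) =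
      (of fun i j : Fin (n + 1) => ∑ s, u s * x s ^ (i + j : ℕ) / (z - x s)) *
        hankelReduction n z := by
    rw [mul_hankelReduction]
    ext i j
    induction j using Fin.cases with
    | zero => rfl
    | succ j =>
      simp only [borderedHankel, of_apply, Fin.cases_succ, Fin.val_castSucc, Fin.val_succ,
        moment, mul_sum, ← sum_sub_distrib]
      refine sum_congr rfl fun s _ => ?_
      have hzs : z - x s ≠ 0 := sub_ne_zero.mpr (hz s)
      field_simp
      ring
  rw [hcolumns, det_mul, det_hankelReduction, mul_left_comm, ← mul_pow]
  simp

variable [DecidableEq ι]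

lemma eval_momentNodal_of_ne {z : K} (hz : ∀ s, z ≠ x s) (k : ℕ) :
    (momentNodal x u k).eval z =
      (Lagrange.nodal univ x).eval z * ∑ s, u s * x s ^ k / (z - x s) := by
  simp only [momentNodal, eval_finsetSum, eval_mul, eval_C, mul_sum]
  refine sum_congr rfl fun s _ => ?_
  have hzs : z - x s ≠ 0 := sub_ne_zero.mpr (hz s)
  rw [Lagrange.nodal_eq_mul_nodal_erase (mem_univ s), eval_mul]
  simp only [eval_sub, eval_X, eval_C]
  field_simp

lemma eval_jacobiNumerator_of_ne {z : K} (hz : ∀ s, z ≠ x s) (n : ℕ) :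
    (jacobiNumerator x u n).eval z = (Lagrange.nodal univ x).eval z *
      (of fun i j : Fin (n + 1) => ∑ s, u s * x s ^ (i + j : ℕ) / (z - x s)).det := by
  rw [← leval_apply, map_jacobiNumerator]
  simp only [leval_apply, eval_momentNodal_of_ne x u hz, det_borderedHankel_mul]
  rw [mul_left_comm, neg_one_pow_mul_det_borderedHankel_stieltjes x u hz]

end Field

end Jacobi

section QGrid

open Finset

lemma prod_univ_erase_eq_mul_prod_range {M : Type*} [CommMonoid M] (g : ℕ → M) {N r : ℕ}
    (t : Fin (N + 1)) (hr : N = t + r) :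
    ∏ s ∈ univ.erase t, g s = (∏ k ∈ range t, g k) * ∏ k ∈ range r, g (t + 1 + k) := by
  let g' : ℕ → M := fun k => if k = t then 1 else g k
  calc ∏ s ∈ univ.erase t, g s = ∏ s ∈ univ.erase t, g' s :=
        prod_congr rfl fun s hs => (if_neg (Fin.val_ne_of_ne (ne_of_mem_erase hs))).symm
    _ = ∏ s : Fin (N + 1), g' s := prod_erase (f := fun s : Fin (N + 1) => g' s) _ (if_pos rfl)
    _ = ∏ k ∈ range (t + 1 + r), g' k := by
      rw [Fin.prod_univ_eq_prod_range g',
        show range (N + 1) = range (t + 1 + r) by congr 1; omega]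
    _ = _ := by
      rw [prod_range_add, prod_range_succ]
      simp only [g', if_pos rfl, mul_one]
      congr 1
      · exact prod_congr rfl fun k hk => if_neg (mem_range.mp hk).ne
      · exact prod_congr rfl fun k _ => if_neg (by omega)

variable {q : ℂ}

lemma qPoch_self_ne_zero (hq1 : ∀ k : ℕ, 0 < k → q ^ k ≠ 1) (r : ℕ) : qPoch q q r ≠ 0 :=
  prod_ne_zero_iff.mpr fun k _ =>
    sub_ne_zero.mpr fun h => hq1 (k + 1) k.succ_pos (by rw [pow_succ, ← h])

lemma prod_range_pow_add_sub_pow (a t : ℕ) :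
    ∏ k ∈ range t, (q ^ (t + a) - q ^ k) =
      (-1) ^ t * q ^ (∑ k ∈ range t, k) * ∏ k ∈ range t, (1 - q ^ (a + k) * q) := by
  induction t with
  | zero => simp
  | succ t ih =>
    have hshift : ∏ k ∈ range t, (q ^ (t + 1 + a) - q ^ (k + 1)) =
        q ^ t * ∏ k ∈ range t, (q ^ (t + a) - q ^ k) := by
      rw [show q ^ t = ∏ _k ∈ range t, q by rw [prod_const, card_range], ← prod_mul_distrib]
      exact prod_congr rfl fun k _ => by ring
    rw [prod_range_succ', hshift, ih, sum_range_succ, prod_range_succ, pow_succ, pow_add, pow_add]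
    ring

lemma prod_range_pow_sub_pow_add (t r : ℕ) :
    ∏ k ∈ range r, (q ^ t - q ^ (t + 1 + k)) = q ^ (t * r) * qPoch q q r := by
  have hconst : q ^ (t * r) = ∏ _k ∈ range r, q ^ t := by rw [prod_const, card_range, pow_mul]
  rw [qPoch, hconst, ← prod_mul_distrib]
  exact prod_congr rfl fun k _ => by ring

lemma pow_mul_qPoch_zpow_neg (hq0 : q ≠ 0) (N t : ℕ) :
    q ^ (N * t) * qPoch q (q ^ (-(N : ℤ))) t = ∏ k ∈ range t, (q ^ N - q ^ k) := by
  have hconst : q ^ (N * t) = ∏ _k ∈ range t, q ^ N := by rw [prod_const, card_range, pow_mul]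
  rw [qPoch, hconst, ← prod_mul_distrib]
  refine prod_congr rfl fun k _ => ?_
  rw [zpow_neg, zpow_natCast]
  field_simp

lemma two_mul_sum_range_id_add (t : ℕ) : 2 * ∑ k ∈ range t, k + t = t * t := by
  induction t with
  | zero => rfl
  | succ t ih => rw [sum_range_succ]; linarith

lemma pow_mul_qPoch_mul_prod_pow_sub_pow (hq0 : q ≠ 0) (t r : ℕ) :
    q ^ t * qPoch q (q ^ (-((t + r : ℕ) : ℤ))) t *
        ((∏ k ∈ range t, (q ^ t - q ^ k)) * ∏ k ∈ range r, (q ^ t - q ^ (t + 1 + k))) =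
      qPoch q q t * qPoch q q (t + r) := by
  set S := ∑ k ∈ range t, k
  set top := ∏ k ∈ range t, (1 - q ^ (r + k) * q)
  have hbelow : ∏ k ∈ range t, (q ^ t - q ^ k) = (-1) ^ t * q ^ S * qPoch q q t := by
    have h := prod_range_pow_add_sub_pow (q := q) 0 t
    simp only [add_zero, zero_add] at h
    exact h
  have htop : qPoch q q (t + r) = qPoch q q r * top := by
    rw [qPoch, qPoch, add_comm, prod_range_add]
  have hexp : q ^ ((t + r) * t) = q ^ t * q ^ S * q ^ S * q ^ (t * r) := by
    rw [← pow_add, ← pow_add, ← pow_add]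
    congr 1
    have hgauss : 2 * S + t = t * t := two_mul_sum_range_id_add t
    nlinarith [hgauss]
  have hinv : q ^ t * q ^ S * q ^ S * q ^ (t * r) * qPoch q (q ^ (-((t + r : ℕ) : ℤ))) t =
      (-1) ^ t * q ^ S * top := by
    rw [← hexp, pow_mul_qPoch_zpow_neg hq0, prod_range_pow_add_sub_pow]
  have hsign : ((-1 : ℂ) ^ t) ^ 2 = 1 := by rw [← pow_mul, mul_comm, pow_mul]; norm_num
  rw [hbelow, prod_range_pow_sub_pow_add, htop]
  refine mul_left_cancel₀ (pow_ne_zero S hq0) ?_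
  linear_combination ((-1) ^ t * qPoch q q t * qPoch q q r) * hinv +
    (q ^ S * top * qPoch q q t * qPoch q q r) * hsign

lemma pow_mul_qPoch_mul_prod_erase (hq0 : q ≠ 0) {N : ℕ} (t : Fin (N + 1)) :
    q ^ (t : ℕ) * qPoch q (q ^ (-(N : ℤ))) t * ∏ s ∈ univ.erase t, (q ^ (t : ℕ) - q ^ (s : ℕ)) =
      qPoch q q t * qPoch q q N := by
  obtain ⟨r, hr⟩ := Nat.exists_eq_add_of_le (Nat.lt_succ_iff.mp t.isLt)
  have hcore := pow_mul_qPoch_mul_prod_pow_sub_pow hq0 t r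
  rw [← hr] at hcore
  rwa [prod_univ_erase_eq_mul_prod_range (fun k => q ^ (t : ℕ) - q ^ k) t hr]

lemma mul_qPoch_div_mul_prod_erase (hq0 : q ≠ 0) (hq1 : ∀ k : ℕ, 0 < k → q ^ k ≠ 1) {N : ℕ}
    (a : ℂ) (t : Fin (N + 1)) :
    a * q ^ (t : ℕ) * qPoch q (q ^ (-(N : ℤ))) t / (qPoch q q t * qPoch q q N) *
      ∏ s ∈ univ.erase t, (q ^ (t : ℕ) - q ^ (s : ℕ)) = a := by
  rw [div_mul_eq_mul_div, div_eq_iff (mul_ne_zero (qPoch_self_ne_zero hq1 _)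
    (qPoch_self_ne_zero hq1 _)), mul_assoc a, mul_assoc a, pow_mul_qPoch_mul_prod_erase hq0]

end QGrid

/-- Specialization of Jacobi's interpolation formulas to the q-grid `x_s = q^s`:
the explicit determinant formulas for `P` and `Q` agree with the general Jacobi
formulas with weights `u_s = ψ_s/F'(q^s)`, and solve the interpolation problem
`ψ_s = P(q^s)/Q(q^s)`. -/
theorem stmt18 (m n : ℕ) (q : ℂ) (hq0 : q ≠ 0) (hq1 : ∀ k : ℕ, 0 < k → q ^ k ≠ 1)
    (ψ : Fin (m + n + 1) → ℂ) :
    let F : ℂ → ℂ := fun x => ∏ i ∈ Finset.range (m + n + 1), (x - q ^ i)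
    let u : Fin (m + n + 1) → ℂ := fun s =>
      ψ s * q ^ (s : ℕ) * qPoch q (q ^ (-((m + n : ℕ) : ℤ))) (s : ℕ) /
        (qPoch q q (s : ℕ) * qPoch q q (m + n))
    let Pe : ℂ → ℂ := fun x =>
      F x / (qPoch q q (m + n)) ^ (n + 1) *
        Matrix.det (Matrix.of fun i j : Fin (n + 1) =>
          ∑ s : Fin (m + n + 1),
            ψ s * (qPoch q (q ^ (-((m + n : ℕ) : ℤ))) (s : ℕ) / qPoch q q (s : ℕ)) *
              q ^ ((s : ℕ) * ((i : ℕ) + (j : ℕ) + 1)) / (x - q ^ (s : ℕ)))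
    let Qe : ℂ → ℂ := fun x =>
      1 / (qPoch q q (m + n)) ^ n *
        Matrix.det (Matrix.of fun i j : Fin n =>
          ∑ s : Fin (m + n + 1),
            ψ s * (qPoch q (q ^ (-((m + n : ℕ) : ℤ))) (s : ℕ) / qPoch q q (s : ℕ)) *
              q ^ ((s : ℕ) * ((i : ℕ) + (j : ℕ) + 1)) * (x - q ^ (s : ℕ)))
    (∀ x : ℂ, (∀ s : Fin (m + n + 1), x ≠ q ^ (s : ℕ)) →
      Pe x = F x * Matrix.det (Matrix.of fun i j : Fin (n + 1) =>
        ∑ s : Fin (m + n + 1),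
          u s * (q ^ (s : ℕ)) ^ ((i : ℕ) + (j : ℕ)) / (x - q ^ (s : ℕ)))) ∧
    (∀ x : ℂ, Qe x = Matrix.det (Matrix.of fun i j : Fin n =>
        ∑ s : Fin (m + n + 1),
          u s * (q ^ (s : ℕ)) ^ ((i : ℕ) + (j : ℕ)) * (x - q ^ (s : ℕ)))) ∧
    ∃ p : Polynomial ℂ, p.degree ≤ m ∧
      (∀ x : ℂ, (∀ s : Fin (m + n + 1), x ≠ q ^ (s : ℕ)) → p.eval x = Pe x) ∧
      ∀ s : Fin (m + n + 1), Qe (q ^ (s : ℕ)) ≠ 0 →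
        ψ s = p.eval (q ^ (s : ℕ)) / Qe (q ^ (s : ℕ)) := by
  intro F u Pe Qe
  have hu (s : Fin (m + n + 1)) (k : ℕ) : u s * (q ^ (s : ℕ)) ^ k = (qPoch q q (m + n))⁻¹ *
      (ψ s * (qPoch q (q ^ (-((m + n : ℕ) : ℤ))) s / qPoch q q s) * q ^ ((s : ℕ) * (k + 1))) := by
    rw [mul_add_one, pow_add, pow_mul]
    simp only [u, div_eq_mul_inv, mul_inv]
    ring
  have hP (z : ℂ) : Pe z = F z * Matrix.det (Matrix.of fun i j : Fin (n + 1) =>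
      ∑ s : Fin (m + n + 1), u s * (q ^ (s : ℕ)) ^ ((i : ℕ) + (j : ℕ)) / (z - q ^ (s : ℕ))) := by
    simp only [Pe, hu]
    simp only [mul_div_assoc, ← Finset.mul_sum, Jacobi.det_of_mul_left]
    ring
  have hQ (z : ℂ) : Qe z = Matrix.det (Matrix.of fun i j : Fin n =>
      ∑ s : Fin (m + n + 1), u s * (q ^ (s : ℕ)) ^ ((i : ℕ) + (j : ℕ)) * (z - q ^ (s : ℕ))) := by
    simp only [Qe, hu]
    simp only [mul_assoc, ← Finset.mul_sum, Jacobi.det_of_mul_left]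
    ring
  have hF (z : ℂ) :
      F z = (Lagrange.nodal Finset.univ fun s : Fin (m + n + 1) => q ^ (s : ℕ)).eval z := by
    rw [Lagrange.eval_nodal, Fin.prod_univ_eq_prod_range (fun i => z - q ^ i)]
  refine ⟨fun z _ => hP z, hQ,
    Jacobi.jacobiNumerator (fun s : Fin (m + n + 1) => q ^ (s : ℕ)) u n,
    Jacobi.degree_jacobiNumerator_le _ _ (Fintype.card_fin _), fun z hz => ?_, fun t ht => ?_⟩
  · rw [Jacobi.eval_jacobiNumerator_of_ne _ _ hz, hP, hF]
  · rw [Jacobi.eval_jacobiNumerator_node (fun s : Fin (m + n + 1) => q ^ (s : ℕ)) u n t,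
      mul_qPoch_div_mul_prod_erase hq0 hq1, ← hQ, mul_div_cancel_right₀ _ ht]
end
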